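/- Let G be a finite group, N ⊴ G, and B, C conjugacy classes of elements of N at distance at least 3 in Γ_G(N) with |B| < |C|. Then the subgroup ⟨BB⁻¹⟩ generated by all products x·y⁻¹ with x, y ∈ B is contained in ⟨CC⁻¹⟩, satisfies C·⟨BB⁻¹⟩ = C, and |⟨BB⁻¹⟩| divides |C|. -/

import Mathlib

/-!
Coprimality of `|B|` and `|C|` gives `C_G(b) C_G(c) = G`, so `C_G(b)` is transitive on `C` and
`C b ⊆ (cb)ᴳ`. The size of `(cb)ᴳ` divides `|B| |C|` and is at least `|C|`. As `cb ∈ N`, the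
distance hypothesis makes it coprime to `|B|` or to `|C|`; the latter would force it to divide
`|B| < |C|`, so it equals `|C|` and `C b = (cb)ᴳ`. Conjugating, `C x = C b` for every `x ∈ B`, hence each `x y⁻¹`
with `x, y ∈ B` stabilises `C` under right multiplication. So `C` is a union of left cosets of
`⟨BB⁻¹⟩`, which gives all three claims.
-/

open scoped Pointwise

/-- The `G`-conjugacy class of `b`, as a set. -/
def gclass {G : Type*} [Group G] (b : G) : Set G := {y | ∃ g : G, g * b * g⁻¹ = y}

open MulAction

namespace Subgroup

variable {G : Type*} [Group G] {H K : Subgroup G}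

theorem index_inf_eq_mul_of_coprime (h : H.index.Coprime K.index) :
    (H ⊓ K).index = H.index * K.index := by
  rcases Nat.eq_zero_or_pos (H ⊓ K).index with h0 | hpos
  · rw [h0, eq_comm, mul_eq_zero]
    by_contra! hne
    exact index_inf_ne_zero hne.1 hne.2 h0
  · exact le_antisymm index_inf_le <| Nat.le_of_dvd hpos <|
      h.mul_dvd_of_dvd_of_dvd (index_dvd_of_le inf_le_left) (index_dvd_of_le inf_le_right)

theorem relIndex_eq_index_of_coprime [H.FiniteIndex] (h : H.index.Coprime K.index) :
    K.relIndex H = K.index := by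
  have key := relIndex_mul_index (inf_le_left : H ⊓ K ≤ H)
  rw [inf_relIndex_left, index_inf_eq_mul_of_coprime h, mul_comm] at key
  exact Nat.eq_of_mul_eq_mul_left (Nat.pos_of_ne_zero FiniteIndex.index_ne_zero) key

theorem exists_mul_eq_of_coprime_index [H.FiniteIndex] [K.FiniteIndex]
    (h : H.index.Coprime K.index) (g : G) : ∃ x ∈ H, ∃ y ∈ K, x * y = g := by
  have hsmul (x : H) : x • ((1 : G) : G ⧸ K) = ((x : G) : G ⧸ K) :=
    congrArg _ (mul_one (x : G))
  have hstab : stabilizer H ((1 : G) : G ⧸ K) = K.subgroupOf H := by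
    ext x
    rw [mem_stabilizer_iff, hsmul, QuotientGroup.eq, mul_one, inv_mem_iff, mem_subgroupOf]
  have horbit : orbit H ((1 : G) : G ⧸ K) = Set.univ := by
    refine Set.eq_of_subset_of_ncard_le (Set.subset_univ _) ?_
    rw [Set.ncard_univ, ← index_stabilizer, hstab, ← relIndex, relIndex_eq_index_of_coprime h,
      index]
  obtain ⟨x, hx⟩ := horbit.symm ▸ Set.mem_univ (g : G ⧸ K)
  exact ⟨x, x.2, (x : G)⁻¹ * g, QuotientGroup.eq.mp ((hsmul x).symm.trans hx),
    mul_inv_cancel_left _ _⟩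

end Subgroup

section ConjugacyClasses

variable {G : Type*} [Group G]

theorem self_mem_gclass (b : G) : b ∈ gclass b :=
  ⟨1, by group⟩

theorem conj_mem_gclass {b y : G} (g : G) (hy : y ∈ gclass b) : g * y * g⁻¹ ∈ gclass b := by
  obtain ⟨h, rfl⟩ := hy
  exact ⟨g * h, by group⟩

theorem conj_image_gclass (g b : G) : MulAut.conj g '' gclass b = gclass b := by
  refine Set.Subset.antisymm (Set.image_subset_iff.mpr fun y hy ↦ conj_mem_gclass g hy)
    fun y hy ↦ ?_
  refine ⟨g⁻¹ * y * g⁻¹⁻¹, conj_mem_gclass g⁻¹ hy, ?_⟩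
  simp only [MulAut.conj_apply]
  group

theorem gclass_eq_orbit (b : G) : gclass b = orbit (ConjAct G) b := by
  ext y
  rw [ConjAct.mem_orbit_conjAct, isConj_comm, isConj_iff]
  rfl

theorem natCard_gclass (b : G) : Nat.card (gclass b) = (Subgroup.centralizer {b}).index := by
  rw [gclass_eq_orbit, Nat.card_coe_set_eq, ← index_stabilizer,
    Subgroup.centralizer_eq_comap_stabilizer]
  exact (Subgroup.index_comap_of_surjective _ ConjAct.toConjAct.surjective).symm

end ConjugacyClasses

section RightTranslates

variable {G : Type*} [Group G]

theorem natCard_mul_singleton (S : Set G) (a : G) : Nat.card (S * {a} : Set G) = Nat.card S := by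
  rw [Set.mul_singleton, Nat.card_image_of_injective (mul_left_injective a)]

theorem mul_singleton_mul_inv_eq {S : Set G} {x y : G} (h : S * {x} = S * {y}) :
    S * {x * y⁻¹} = S := by
  rw [← Set.singleton_mul_singleton, ← mul_assoc, h, mul_assoc, Set.singleton_mul_singleton,
    mul_inv_cancel, Set.singleton_one, mul_one]

theorem mul_closure_eq_of_forall_mul_singleton_eq {S T : Set G} (hT : ∀ t ∈ T, S * {t} = S) :
    S * Subgroup.closure T = S := by
  have hstab : ∀ h ∈ Subgroup.closure T, S * {h} = S := by
    intro h hh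
    induction hh using Subgroup.closure_induction with
    | mem t ht => exact hT t ht
    | one => rw [Set.singleton_one, mul_one]
    | mul x y _ _ hx hy => rw [← Set.singleton_mul_singleton, ← mul_assoc, hx, hy]
    | inv x _ hx =>
      simpa only [one_mul] using
        mul_singleton_mul_inv_eq (x := 1) (y := x) (by rw [hx, Set.singleton_one, mul_one])
  ext z
  refine ⟨?_, fun hz ↦ ⟨z, hz, 1, one_mem _, mul_one z⟩⟩
  rintro ⟨s, hs, h, hh, rfl⟩
  exact hstab h hh ▸ Set.mul_mem_mul hs rfl

theorem natCard_dvd_of_mul_eq {S : Set G} {H : Subgroup G} (h : S * H = S) :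
    Nat.card H ∣ Nat.card S :=
  Dvd.intro _ (h ▸ (Subgroup.card_mul_eq_card_subgroup_mul_card_quotient H S).symm)

end RightTranslates

section CoprimeClasses

variable {G : Type*} [Group G] {b c : G}

theorem exists_mem_centralizer_conj_eq [Finite G]
    (hcop : (Nat.card (gclass b)).Coprime (Nat.card (gclass c))) {z : G} (hz : z ∈ gclass c) :
    ∃ u ∈ Subgroup.centralizer {b}, u * c * u⁻¹ = z := by
  obtain ⟨g, rfl⟩ := hz
  rw [natCard_gclass, natCard_gclass] at hcop
  obtain ⟨x, hx, y, hy, rfl⟩ := Subgroup.exists_mul_eq_of_coprime_index hcop g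
  rw [Subgroup.mem_centralizer_singleton_iff] at hy
  refine ⟨x, hx, ?_⟩
  calc x * c * x⁻¹ = x * (y * c * y⁻¹) * x⁻¹ := by rw [hy, mul_inv_cancel_right]
    _ = x * y * c * (x * y)⁻¹ := by group

theorem gclass_mul_singleton_subset [Finite G]
    (hcop : (Nat.card (gclass b)).Coprime (Nat.card (gclass c))) :
    gclass c * {b} ⊆ gclass (c * b) := by
  rintro _ ⟨z, hz, b', hb', rfl⟩
  rw [Set.mem_singleton_iff.mp hb']
  obtain ⟨u, hu, rfl⟩ := exists_mem_centralizer_conj_eq hcop hz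
  have hub : u⁻¹ * b = b * u⁻¹ :=
    Subgroup.mem_centralizer_singleton_iff.mp (Subgroup.inv_mem _ hu)
  refine ⟨u, ?_⟩
  calc u * (c * b) * u⁻¹ = u * c * (b * u⁻¹) := by group
    _ = u * c * u⁻¹ * b := by rw [← hub]; group

theorem natCard_gclass_mul_dvd (hcop : (Nat.card (gclass b)).Coprime (Nat.card (gclass c))) :
    Nat.card (gclass (c * b)) ∣ Nat.card (gclass b) * Nat.card (gclass c) := by
  rw [natCard_gclass, natCard_gclass] at hcop ⊢
  rw [natCard_gclass, ← Subgroup.index_inf_eq_mul_of_coprime hcop]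
  refine Subgroup.index_dvd_of_le fun k hk ↦ ?_
  obtain ⟨hkb, hkc⟩ := Subgroup.mem_inf.mp hk
  rw [Subgroup.mem_centralizer_singleton_iff] at hkb hkc ⊢
  rw [← mul_assoc, hkc, mul_assoc, hkb, mul_assoc]

theorem gclass_mul_singleton_eq [Finite G]
    (hcop : (Nat.card (gclass b)).Coprime (Nat.card (gclass c)))
    (hlt : Nat.card (gclass b) < Nat.card (gclass c))
    (hD : (Nat.card (gclass (c * b))).Coprime (Nat.card (gclass b)) ∨
      (Nat.card (gclass (c * b))).Coprime (Nat.card (gclass c))) :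
    gclass c * {b} = gclass (c * b) := by
  have hsub := gclass_mul_singleton_subset hcop
  have hle : Nat.card (gclass c) ≤ Nat.card (gclass (c * b)) :=
    natCard_mul_singleton (gclass c) b ▸ Nat.card_mono (Set.toFinite _) hsub
  have hdvd := natCard_gclass_mul_dvd hcop
  have hpos (a : G) : 0 < Nat.card (gclass a) := by
    rw [natCard_gclass]
    exact Nat.pos_of_ne_zero Subgroup.index_ne_zero_of_finite
  have hcard : Nat.card (gclass (c * b)) = Nat.card (gclass c) := by
    rcases hD with hDB | hDC
    · exact le_antisymm (Nat.le_of_dvd (hpos c) (hDB.dvd_of_dvd_mul_left hdvd)) hle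
    · have hDB := Nat.le_of_dvd (hpos b) (hDC.dvd_of_dvd_mul_right hdvd)
      omega
  refine Set.eq_of_subset_of_ncard_le hsub ?_
  rw [← Nat.card_coe_set_eq, ← Nat.card_coe_set_eq, natCard_mul_singleton, hcard]

theorem gclass_mul_singleton_eq_of_mem {d x : G} (h : gclass c * {b} = gclass d)
    (hx : x ∈ gclass b) : gclass c * {x} = gclass c * {b} := by
  obtain ⟨g, rfl⟩ := hx
  calc gclass c * {g * b * g⁻¹} = MulAut.conj g '' (gclass c * {b}) := by
        rw [Set.image_mul, conj_image_gclass, Set.image_singleton, MulAut.conj_apply]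
    _ = gclass c * {b} := by rw [h, conj_image_gclass]

theorem coe_subset_mul_inv_of_gclass_mul_eq {H : Subgroup G} (h : gclass c * H = gclass c) :
    (H : Set G) ⊆ gclass c * (gclass c)⁻¹ := by
  intro x hx
  have hcx : c * x ∈ gclass c := h ▸ Set.mul_mem_mul (self_mem_gclass c) hx
  refine ⟨c⁻¹ * (c * x) * c⁻¹⁻¹, conj_mem_gclass c⁻¹ hcx, c⁻¹, ?_, by group⟩
  rw [Set.mem_inv, inv_inv]
  exact self_mem_gclass c

end CoprimeClasses

theorem stmt3_general {G : Type*} [Group G] [Finite G] (N : Subgroup G)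
    (b c : G) (hb : b ∈ N) (hc : c ∈ N)
    (hcop : Nat.Coprime (Nat.card (gclass b)) (Nat.card (gclass c)))
    (hlt : Nat.card (gclass b) < Nat.card (gclass c))
    (hdist : ∀ d ∈ N, ¬ (¬ Nat.Coprime (Nat.card (gclass d)) (Nat.card (gclass b)) ∧
        ¬ Nat.Coprime (Nat.card (gclass d)) (Nat.card (gclass c)))) :
    Subgroup.closure (gclass b * (gclass b)⁻¹) ≤ Subgroup.closure (gclass c * (gclass c)⁻¹) ∧
    gclass c * ↑(Subgroup.closure (gclass b * (gclass b)⁻¹)) = gclass c ∧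
    Nat.card (Subgroup.closure (gclass b * (gclass b)⁻¹)) ∣ Nat.card (gclass c) := by
  have hD := (not_and_or.mp (hdist (c * b) (N.mul_mem hc hb))).imp not_not.mp not_not.mp
  have hCb := gclass_mul_singleton_eq hcop hlt hD
  have hgen : ∀ t ∈ gclass b * (gclass b)⁻¹, gclass c * {t} = gclass c := by
    rintro _ ⟨x, hx, y, hy, rfl⟩
    rw [← inv_inv y]
    exact mul_singleton_mul_inv_eq <|
      (gclass_mul_singleton_eq_of_mem hCb hx).trans (gclass_mul_singleton_eq_of_mem hCb hy).symm
  have hmul := mul_closure_eq_of_forall_mul_singleton_eq hgen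
  exact ⟨fun x hx ↦ Subgroup.subset_closure (coe_subset_mul_inv_of_gclass_mul_eq hmul hx), hmul,
    natCard_dvd_of_mul_eq hmul⟩

theorem stmt3 {G : Type*} [Group G] [Finite G] (N : Subgroup G) (hN : N.Normal)
    (b c : G) (hb : b ∈ N) (hc : c ∈ N)
    (hbnc : 1 < Nat.card (gclass b)) (hcnc : 1 < Nat.card (gclass c))
    (hcop : Nat.Coprime (Nat.card (gclass b)) (Nat.card (gclass c)))
    (hlt : Nat.card (gclass b) < Nat.card (gclass c))
    (hdist : ∀ d ∈ N, ¬ (¬ Nat.Coprime (Nat.card (gclass d)) (Nat.card (gclass b)) ∧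
        ¬ Nat.Coprime (Nat.card (gclass d)) (Nat.card (gclass c)))) :
    Subgroup.closure (gclass b * (gclass b)⁻¹) ≤ Subgroup.closure (gclass c * (gclass c)⁻¹) ∧
    gclass c * ↑(Subgroup.closure (gclass b * (gclass b)⁻¹)) = gclass c ∧
    Nat.card (Subgroup.closure (gclass b * (gclass b)⁻¹)) ∣ Nat.card (gclass c) :=
  stmt3_general N b c hb hc hcop hlt hdist
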